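/- arXiv:2210.13245 — 5 statements merged into one kernel-verified Lean document; each statement's English description precedes it below -/
import Mathlib

section
/- Let $s$ be a positive integer, and let $b,c,t$ be nonnegative integers. Let $k_1,\dots,k_s$ be integers with $1\leq k_i\leq (s-1)c+b+t$ for all $i$. Then at least one of the following holds: (1) $1\leq k_i\leq b$ for some $i$; (2) $-c\leq k_i-k_j\leq c-1$ for some $i<j$; (3) there exist a permutation $w$ of $\{1,\dots,s\}$ and nonnegative integers $t_1,\dots,t_s$ with $k_{w(1)}=b+t_1$, $k_{w(j)}-k_{w(j-1)}=c+t_j$ for $2\leq j\leq s$, $1\leq t_1+\cdots+t_s\leq t$, and $t_j>0$ whenever $w(j-1)<w(j)$ (with the convention $w(0)=0$). -/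
/-!
If no `k i` lies in `[1, b]` and no pair `i < j` has `k i - k j ∈ [-c, c)`, list the indices
so that `k` increases, breaking ties by putting the larger index first. Consecutive values then
differ by at least `c`, and by at least `c + 1` at an ascent of the listing, because a pair in
increasing index order with difference exactly `c` is excluded. Hence the increments `t_j` are
nonnegative, positive at ascents (and at the start, as `k > b`), and they telescope to
`k_{w(s)} - b - (s - 1) c ≤ t`.
-/

open Finset

theorem Fin.sum_succ_sub_castSucc {G : Type*} [AddCommGroup G] {n : ℕ} (x : Fin (n + 1) → G) :
    ∑ j : Fin n, (x j.succ - x j.castSucc) = x (Fin.last n) - x 0 := by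
  induction n with
  | zero => simp
  | succ n ih =>
    rw [Fin.sum_univ_castSucc]
    simp only [Fin.succ_castSucc]
    rw [ih (fun i => x i.castSucc)]
    simp only [Fin.succ_last, Fin.castSucc_zero]
    abel

theorem Tuple.strictMono_comp_sort {α : Type*} [LinearOrder α] {n : ℕ} {f : Fin n → α}
    (hf : Function.Injective f) : StrictMono (f ∘ Tuple.sort f) :=
  (Tuple.monotone_sort f).strictMono_of_injective (hf.comp (Tuple.sort f).injective)

theorem le_sub_of_toLex_lt {ι : Type*} [LinearOrder ι] {c : ℕ} {k : ι → ℤ}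
    (hsep : ∀ i j, i < j → -(c : ℤ) ≤ k i - k j → (c : ℤ) - 1 < k i - k j) {a a' : ι}
    (h : toLex (k a, OrderDual.toDual a) < toLex (k a', OrderDual.toDual a')) :
    (c : ℤ) ≤ k a' - k a ∧ (a < a' → (c : ℤ) + 1 ≤ k a' - k a) := by
  rw [Prod.Lex.toLex_lt_toLex, OrderDual.toDual_lt_toDual] at h
  have hne : a ≠ a' := by
    rintro rfl
    exact h.elim (lt_irrefl _) fun h' => lt_irrefl _ h'.2
  rcases hne.lt_or_gt with hlt | hgt
  · have hk : k a < k a' := h.resolve_right fun h' => h'.2.not_gt hlt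
    have := hsep a a' hlt
    constructor <;> omega
  · have hk : k a ≤ k a' := h.elim le_of_lt fun h' => h'.1.le
    have := hsep a' a hgt
    exact ⟨by omega, fun h' => absurd h' hgt.not_gt⟩

theorem exists_increments {n : ℕ} (b c t : ℕ) (x : Fin (n + 1) → ℤ) (h0 : (b : ℤ) ≤ x 0)
    (hstep : ∀ j : Fin n, (c : ℤ) ≤ x j.succ - x j.castSucc)
    (hlast : x (Fin.last n) ≤ n * c + b + t) :
    ∃ tt : Fin (n + 1) → ℕ, x 0 = b + tt 0 ∧
      (∀ j : Fin n, x j.succ - x j.castSucc = c + tt j.succ) ∧ ∑ j, tt j ≤ t := by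
  obtain ⟨d, hd0, hd_succ⟩ : ∃ d : Fin (n + 1) → ℤ,
      d 0 = x 0 - b ∧ ∀ j : Fin n, d j.succ = x j.succ - x j.castSucc - c :=
    ⟨Fin.cons _ fun j => x j.succ - x j.castSucc - c, rfl, fun _ => rfl⟩
  have hd : ∀ j, ((d j).toNat : ℤ) = d j := fun j => Int.toNat_of_nonneg <|
    Fin.cases (by omega) (fun j => by linarith [hstep j, hd_succ j]) j
  have hsum : ∑ j, d j = x (Fin.last n) - b - n * c := by
    rw [Fin.sum_univ_succ, hd0]
    simp only [hd_succ]
    rw [sum_sub_distrib, Fin.sum_succ_sub_castSucc]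
    simp only [sum_const, card_univ, Fintype.card_fin, nsmul_eq_mul]
    ring
  refine ⟨fun j => (d j).toNat, ?_, fun j => ?_, ?_⟩
  · simp only [hd]
    omega
  · simp only [hd]
    linarith [hd_succ j]
  · zify
    simp only [hd]
    omega

theorem key_distribution_lemma (s : ℕ) (hs : 1 ≤ s) (b c t : ℕ) (k : Fin s → ℤ)
    (hk : ∀ i, 1 ≤ k i ∧ k i ≤ (((s - 1) * c + b + t : ℕ) : ℤ)) :
    (∃ i, 1 ≤ k i ∧ k i ≤ (b : ℤ)) ∨
    (∃ i j : Fin s, i < j ∧ -(c : ℤ) ≤ k i - k j ∧ k i - k j ≤ (c : ℤ) - 1) ∨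
    (∃ (w : Equiv.Perm (Fin s)) (tt : Fin s → ℕ),
      k (w ⟨0, hs⟩) = (b : ℤ) + tt ⟨0, hs⟩ ∧
      (∀ j : ℕ, (hj : j + 1 < s) →
        k (w ⟨j + 1, hj⟩) - k (w ⟨j, Nat.lt_of_succ_lt hj⟩) = (c : ℤ) + tt ⟨j + 1, hj⟩) ∧
      1 ≤ ∑ j, tt j ∧ ∑ j, tt j ≤ t ∧
      0 < tt ⟨0, hs⟩ ∧
      (∀ j : ℕ, (hj : j + 1 < s) →
        w ⟨j, Nat.lt_of_succ_lt hj⟩ < w ⟨j + 1, hj⟩ → 0 < tt ⟨j + 1, hj⟩)) := by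
  by_cases h1 : ∃ i, 1 ≤ k i ∧ k i ≤ (b : ℤ)
  · exact Or.inl h1
  by_cases h2 : ∃ i j : Fin s, i < j ∧ -(c : ℤ) ≤ k i - k j ∧ k i - k j ≤ (c : ℤ) - 1
  · exact Or.inr (Or.inl h2)
  right; right
  push Not at h1 h2
  obtain ⟨n, rfl⟩ : ∃ n, s = n + 1 := ⟨s - 1, by omega⟩
  have hb i : (b : ℤ) < k i := h1 i (hk i).1
  obtain ⟨w, hw⟩ : ∃ w : Equiv.Perm (Fin (n + 1)),
      StrictMono fun j => toLex (k (w j), OrderDual.toDual (w j)) :=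
    ⟨_, Tuple.strictMono_comp_sort (f := fun i => toLex (k i, OrderDual.toDual i))
      fun i i' h => by simpa using congrArg (fun p => OrderDual.ofDual (ofLex p).2) h⟩
  have hstep (j : Fin n) := le_sub_of_toLex_lt h2 (hw j.castSucc_lt_succ)
  obtain ⟨tt, h0, hsucc, hsum⟩ := exists_increments b c t (k ∘ w) (hb _).le
    (fun j => (hstep j).1) (by simpa using (hk (w (Fin.last n))).2)
  have htt0 : 0 < tt 0 := by have := hb (w 0); simp only [Function.comp_apply] at h0; omega
  refine ⟨w, tt, h0, fun j hj => hsucc ⟨j, by omega⟩, htt0.trans_le (single_le_sum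
    (fun _ _ => Nat.zero_le _) (mem_univ _)), hsum, htt0, fun j hj hasc => ?_⟩
  have hj' : j < n := by omega
  have hgap := (hstep ⟨j, hj'⟩).2 hasc
  have hinc := hsucc ⟨j, hj'⟩
  change 0 < tt (Fin.succ ⟨j, hj'⟩)
  simp only [Function.comp_apply] at hinc
  omega
end

section
/- Let $s$ be a positive integer and $b,c$ nonnegative integers. Suppose the integers $k_1,\dots,k_s$ satisfy $k_i = (s-i)c+b+1$ for $i=1,\dots,s$. Then for any permutation $w$ of $\{1,\dots,s\}$ with $k_{w(1)}=b+t_1$ and $k_{w(j)}-k_{w(j-1)}=c+t_j$ ($2\le j\le s$) with all $t_j\geq 0$ and $t_j>0$ whenever $w(j-1)<w(j)$ (convention $w(0)=0$), one has $w(j)=s+1-j$ for all $j$ when $t_1+\cdots+t_s=1$. Conversely, in case (3) of the key lemma with $t=1$, the unique solution is $k_i=(s-i)c+b+1$. -/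
/-!
The t = 1 specialization of the key distribution lemma.
Indices are 0-based: `k i` (`i : Fin s`) corresponds to `k_{i+1}`, so the
conclusion `k_i = (s-i)c+b+1` (1-based) reads `k i = (s-1-i)c + b + 1`, and
`w(j) = s+1-j` (1-based) reads `(w j : ℕ) = s-1-j`.
The hypotheses are exactly the conditions of case (3) of the key lemma with
`t = 1` (so the total increment `∑ tt = 1`), together with the ambient bounds
`1 ≤ k i ≤ (s-1)c + b + 1`.
-/

open Finset

theorem key_lemma_t_eq_one (s : ℕ) (hs : 1 ≤ s) (b c : ℕ) (k : Fin s → ℤ)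
    (hk : ∀ i, 1 ≤ k i ∧ k i ≤ (((s - 1) * c + b + 1 : ℕ) : ℤ))
    (w : Equiv.Perm (Fin s)) (tt : Fin s → ℕ)
    (h1 : k (w ⟨0, hs⟩) = (b : ℤ) + tt ⟨0, hs⟩)
    (h2 : ∀ j : ℕ, (hj : j + 1 < s) →
      k (w ⟨j + 1, hj⟩) - k (w ⟨j, Nat.lt_of_succ_lt hj⟩) = (c : ℤ) + tt ⟨j + 1, hj⟩)
    (hfirst : 0 < tt ⟨0, hs⟩)
    (hasc : ∀ j : ℕ, (hj : j + 1 < s) →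
      w ⟨j, Nat.lt_of_succ_lt hj⟩ < w ⟨j + 1, hj⟩ → 0 < tt ⟨j + 1, hj⟩)
    (hsum : ∑ j, tt j = 1) :
    (∀ j : Fin s, ((w j : ℕ) = s - 1 - (j : ℕ))) ∧
    (∀ i : Fin s, k i = (((s - 1 - (i : ℕ)) * c + b + 1 : ℕ) : ℤ)) := by
  have h0 : tt ⟨0, hs⟩ = 1 := by
    have hle := Finset.single_le_sum (f := tt) (fun i _ => Nat.zero_le _)
      (Finset.mem_univ ⟨0, hs⟩)
    omega
  have hz : ∀ j : Fin s, j ≠ ⟨0, hs⟩ → tt j = 0 := by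
    intro j hj
    have h := Finset.add_sum_erase Finset.univ tt (Finset.mem_univ ⟨0, hs⟩)
    rw [hsum, h0] at h
    have hzero : ∑ x ∈ Finset.univ.erase ⟨0, hs⟩, tt x = 0 := by omega
    exact (Finset.sum_eq_zero_iff).mp hzero j
      (Finset.mem_erase.mpr ⟨hj, Finset.mem_univ j⟩)
  have hdec : ∀ j : ℕ, (hj : j + 1 < s) →
      w ⟨j + 1, hj⟩ < w ⟨j, Nat.lt_of_succ_lt hj⟩ := by
    intro j hj
    have ht : tt ⟨j + 1, hj⟩ = 0 := hz _ (by simp)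
    have hne : w ⟨j + 1, hj⟩ ≠ w ⟨j, Nat.lt_of_succ_lt hj⟩ := by
      intro h
      have := w.injective h
      simp [Fin.ext_iff] at this
    rcases lt_or_gt_of_ne hne with h | h
    · exact h
    · exact absurd (hasc j hj h) (by omega)
  -- upper bound
  have ub : ∀ j : ℕ, (hj : j < s) → (w ⟨j, hj⟩ : ℕ) + j ≤ s - 1 := by
    intro j
    induction j with
    | zero => intro hj; have := (w ⟨0, hj⟩).isLt; omega
    | succ n ih =>
      intro hj
      have h1 := hdec n hj
      have h2 := ih (Nat.lt_of_succ_lt hj)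
      have h3 : (w ⟨n + 1, hj⟩ : ℕ) < (w ⟨n, Nat.lt_of_succ_lt hj⟩ : ℕ) := h1
      omega
  -- lower bound, downward induction
  have lb : ∀ m : ℕ, ∀ j : ℕ, (hj : j < s) → s - 1 - j ≤ m →
      s - 1 ≤ (w ⟨j, hj⟩ : ℕ) + j := by
    intro m
    induction m with
    | zero => intro j hj hm; omega
    | succ n ih =>
      intro j hj hm
      by_cases hcase : j + 1 < s
      · have h1 := hdec j hcase
        have h2 := ih (j + 1) hcase (by omega)
        have h3 : (w ⟨j + 1, hcase⟩ : ℕ) < (w ⟨j, hj⟩ : ℕ) := h1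
        omega
      · omega
  have hwj : ∀ j : ℕ, (hj : j < s) → (w ⟨j, hj⟩ : ℕ) = s - 1 - j := by
    intro j hj
    have := ub j hj
    have := lb (s - 1 - j) j hj le_rfl
    omega
  -- values of k along w
  have kv : ∀ j : ℕ, (hj : j < s) → k (w ⟨j, hj⟩) = ((j * c + b + 1 : ℕ) : ℤ) := by
    intro j
    induction j with
    | zero =>
      intro hj
      rw [h1, h0]
      push_cast
      ring
    | succ n ih =>
      intro hj
      have hd := h2 n hj
      have ht : tt ⟨n + 1, hj⟩ = 0 := hz _ (by simp)
      rw [ht, ih (Nat.lt_of_succ_lt hj)] at hd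
      push_cast at hd ⊢
      linarith
  constructor
  · intro j
    have := hwj j.1 j.2
    simpa using this
  · intro i
    set j : Fin s := w.symm i with hjdef
    have hwi : w j = i := Equiv.apply_symm_apply w i
    have hji : (i : ℕ) = s - 1 - (j : ℕ) := by
      rw [← hwi]; exact hwj j.1 j.2
    have hjlt : (j : ℕ) < s := j.isLt
    have hjeq : s - 1 - (i : ℕ) = (j : ℕ) := by omega
    have hk1 : k i = (((j : ℕ) * c + b + 1 : ℕ) : ℤ) := by
      rw [← hwi]
      have := kv j.1 j.2
      simpa using this
    rw [hjeq, hk1]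
end

section
/- In the field of iterated Laurent series $K\langle\langle x_n,\dots,x_0\rangle\rangle = K((x_n))\cdots((x_0))$, for $c\in K\setminus\{0\}$ and indices $i\neq j$, the constant term with respect to $x_i$ of $1/(1-c\,x_i/x_j)$ equals $1$ if $i<j$ and $0$ if $i>j$. -/
/-!
Write `g` for the exponent of `x_i/x_j`, which is positive in the lexicographic order iff
`i < j`. If `g > 0` then `1/(1 - c x^g)` is the geometric series `∑ₖ cᵏ x^{k g}`; if `g < 0`
then `1/(1 - c x^g) = 1 - 1/(1 - c⁻¹ x^{-g})` reduces to the first case. Either way the support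
lies in the multiples of `g`, and a nonzero multiple of `g` has nonzero `i`-th entry, so the only
contribution to `CT_{x_i}` is the constant `1` when `g > 0`.
-/

noncomputable section

def wfFin (N : ℕ) : WellFoundedLT (Fin N) := inferInstance

noncomputable instance lexGrp (N : ℕ) : LinearOrder (Lex (Fin N → ℤ)) :=
  @Pi.Lex.linearOrder (Fin N) (fun _ => ℤ) _ (wfFin N) _

/-- the field of iterated Laurent series in `N` variables over `K` -/
abbrev ILS (N : ℕ) (K : Type) [Field K] : Type := HahnSeries (Lex (Fin N → ℤ)) K

theorem inv_one_sub_eq_one_sub_inv_one_sub_inv {F : Type*} [Field F] {x : F} (h₀ : x ≠ 0)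
    (h₁ : x ≠ 1) : (1 - x)⁻¹ = 1 - (1 - x⁻¹)⁻¹ := by
  have hx : 1 - x ≠ 0 := sub_ne_zero.2 h₁.symm
  field_simp
  ring

namespace HahnSeries

variable {Γ : Type*} [AddCommGroup Γ] [LinearOrder Γ] [IsOrderedAddMonoid Γ]
  {K : Type*} [Field K] {g w : Γ}

theorem coeff_inv_one_sub_single_of_pos (hg : 0 < g) (c : K)
    (hw : ∀ m : ℤ, m ≠ 0 → w ≠ m • g) :
    ((1 - single g c)⁻¹ : HahnSeries Γ K).coeff w = if w = 0 then 1 else 0 := by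
  have hx : 0 < (single g c).orderTop := lt_orderTop_single hg
  rw [inv_eq_of_mul_eq_one_right (SummableFamily.one_sub_self_mul_hsum_powers hx),
    SummableFamily.coeff_hsum, finsum_eq_single _ 0 fun k hk => ?_]
  · simp [coeff_one]
  · rw [SummableFamily.powers_of_orderTop_pos hx, single_pow,
      coeff_single_of_ne (natCast_zsmul g k ▸ hw k (by exact_mod_cast hk))]

theorem coeff_inv_one_sub_single_of_neg (hg : g < 0) {c : K} (hc : c ≠ 0)
    (hw : ∀ m : ℤ, m ≠ 0 → w ≠ m • g) :
    ((1 - single g c)⁻¹ : HahnSeries Γ K).coeff w = 0 := by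
  have h₁ : single g c ≠ 1 := fun h =>
    hc (by simpa [coeff_one, hg.ne] using congrArg (coeff · g) h)
  rw [inv_one_sub_eq_one_sub_inv_one_sub_inv (single_ne_zero hc) h₁, inv_single, coeff_sub,
    coeff_one, coeff_inv_one_sub_single_of_pos (neg_pos.2 hg) c⁻¹ fun m hm => ?_]
  · split_ifs <;> simp
  rw [smul_neg, ← neg_smul]
  exact hw (-m) (neg_ne_zero.2 hm)

end HahnSeries

theorem toLex_single_sub_single_pos {N : ℕ} {i j : Fin N} (h : i < j) :
    (0 : Lex (Fin N → ℤ)) < toLex (Pi.single i 1 - Pi.single j 1) :=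
  ⟨i, fun k hk => show (0 : ℤ) = _ by simp [hk.ne, (hk.trans h).ne],
    show (0 : ℤ) < _ by simp [h.ne]⟩

theorem toLex_single_sub_single_neg {N : ℕ} {i j : Fin N} (h : j < i) :
    toLex (Pi.single i 1 - Pi.single j 1 : Fin N → ℤ) < 0 := by
  rw [← neg_pos, ← toLex_neg, neg_sub]
  exact toLex_single_sub_single_pos h

theorem toLex_ne_zsmul_toLex {ι : Type*} {v a : ι → ℤ} {i : ι} (hv : v i = 0) (ha : a i ≠ 0)
    {m : ℤ} (hm : m ≠ 0) : toLex v ≠ m • toLex a := by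
  intro h
  have hvi : v i = m * a i := congrArg (fun x : Lex (ι → ℤ) => ofLex x i) h
  exact mul_ne_zero hm ha (hv ▸ hvi).symm

theorem CT_one_sub_ratio_general {K : Type} [Field K] (n : ℕ) (c : K) (hc : c ≠ 0)
    (i j : Fin (n + 1)) :
    (i < j → ∀ v : Fin (n + 1) → ℤ, v i = 0 →
      ((1 - HahnSeries.single (toLex (Pi.single i 1 - Pi.single j 1)) c)⁻¹ :
          ILS (n + 1) K).coeff (toLex v) = if v = 0 then 1 else 0) ∧
    (j < i → ∀ v : Fin (n + 1) → ℤ, v i = 0 →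
      ((1 - HahnSeries.single (toLex (Pi.single i 1 - Pi.single j 1)) c)⁻¹ :
          ILS (n + 1) K).coeff (toLex v) = 0) := by
  have hw : ∀ v : Fin (n + 1) → ℤ, v i = 0 → i ≠ j → ∀ m : ℤ, m ≠ 0 →
      toLex v ≠ m • toLex (Pi.single i 1 - Pi.single j 1 : Fin (n + 1) → ℤ) :=
    fun v hv hij _ hm => toLex_ne_zsmul_toLex hv (by simp [hij]) hm
  refine ⟨fun hlt v hv => ?_, fun hlt v hv => ?_⟩
  · rw [HahnSeries.coeff_inv_one_sub_single_of_pos (toLex_single_sub_single_pos hlt) c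
      (hw v hv hlt.ne)]
    simp
  · exact HahnSeries.coeff_inv_one_sub_single_of_neg (toLex_single_sub_single_neg hlt) hc
      (hw v hv hlt.ne')

theorem CT_one_sub_ratio {K : Type} [Field K] (n : ℕ) (c : K) (hc : c ≠ 0)
    (i j : Fin (n + 1)) (hij : i ≠ j) :
    (i < j → ∀ v : Fin (n + 1) → ℤ, v i = 0 →
      ((1 - HahnSeries.single (toLex (Pi.single i 1 - Pi.single j 1)) c)⁻¹ :
          ILS (n + 1) K).coeff (toLex v) = if v = 0 then 1 else 0) ∧
    (j < i → ∀ v : Fin (n + 1) → ℤ, v i = 0 →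
      ((1 - HahnSeries.single (toLex (Pi.single i 1 - Pi.single j 1)) c)⁻¹ :
          ILS (n + 1) K).coeff (toLex v) = 0) :=
  CT_one_sub_ratio_general n c hc i j

end
end

section
/- Let $L(x_1,\dots,x_n)$ be a Laurent polynomial independent of $a$ and $x_0$, and let $t\leq nb$ be an integer, with $b$ a nonnegative integer. Then $\mathrm{CT}_x\, x_0^{t}\,L(x_1,\dots,x_n)\prod_{i=1}^n(x_0/x_i;q)_a\,(qx_i/x_0;q)_b$ is a polynomial in $q^a$ of degree at most $nb-t$. Moreover, if $t>nb$ then this constant term vanishes. -/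
/-!
Monomials `x^w` are exponent vectors `w : Fin (n + 1) → ℤ`, with `x₀` in coordinate `0` and
`xᵢ` in coordinate `i.succ`.

Write the integrand as `F · P_a` with `F = x₀^t L ∏ (q xᵢ/x₀; q)_b` independent of `a` and
`P_a = ∏ (x₀/xᵢ; q)_a`. Then `CT (F P_a) = ∑_u F_u [x^(-u)] P_a` is a sum over the fixed finite
support of `F`, on which the exponent of `x₀` is at least `t - nb`. The factors of `P_a` involve
disjoint variables `xᵢ`, so the coefficient of `x₀^(∑ kᵢ) ∏ xᵢ^(-kᵢ)` in `P_a` is the product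
of the coefficients of `z^kᵢ` in `(z; q)_a`, each a polynomial of degree `kᵢ` in `q^a`. Hence
every coefficient `[x^w] P_a` is a polynomial in `q^a` of degree at most `w₀` (zero if `w₀ < 0`),
and the constant term is one of degree at most `nb - t`.
-/

open Finset

noncomputable section

abbrev K : Type := RatFunc ℚ
noncomputable def q : K := RatFunc.X
abbrev L (m : ℕ) : Type := AddMonoidAlgebra K (Fin m → ℤ)
noncomputable def mon {m : ℕ} (v : Fin m → ℤ) (a : K) : L m := AddMonoidAlgebra.single v a
noncomputable def poch {m : ℕ} (v : Fin m → ℤ) (a : K) (k : ℕ) : L m :=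
  ∏ j ∈ Finset.range k, (1 - mon v (a * q ^ j))
noncomputable def CT {m : ℕ} (f : L m) : K := f.coeff 0
noncomputable def e {m : ℕ} (i : Fin m) : Fin m → ℤ := Pi.single i 1

namespace AddMonoidAlgebra

variable {R G : Type*}

theorem support_prod_subset_addSubmonoid [CommSemiring R] [AddCommMonoid G] {ι : Type*}
    (S : AddSubmonoid G) (s : Finset ι) (f : ι → AddMonoidAlgebra R G)
    (h : ∀ i ∈ s, ↑(f i).coeff.support ⊆ (S : Set G)) :
    ↑(∏ i ∈ s, f i).coeff.support ⊆ (S : Set G) := by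
  classical
  refine Finset.prod_induction f (fun x => ↑x.coeff.support ⊆ (S : Set G)) ?_ ?_ h
  · intro x y hx hy u hu
    obtain ⟨u₁, hu₁, u₂, hu₂, rfl⟩ := Finset.mem_add.1 (support_coeff_mul_subset x y hu)
    exact S.add_mem (hx hu₁) (hy hu₂)
  · intro u hu
    rw [one_def, coeff_single, Finset.mem_coe] at hu
    rw [Finset.mem_singleton.1 (Finsupp.support_single_subset hu)]
    exact S.zero_mem

theorem le_of_mem_support_mul [Semiring R] [AddZeroClass G] (D : G →+ ℤ)
    {f g : AddMonoidAlgebra R G} {c d : ℤ} (hf : ∀ u ∈ f.coeff.support, c ≤ D u)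
    (hg : ∀ u ∈ g.coeff.support, d ≤ D u) :
    ∀ u ∈ (f * g).coeff.support, c + d ≤ D u := by
  classical
  intro u hu
  obtain ⟨u₁, hu₁, u₂, hu₂, rfl⟩ := Finset.mem_add.1 (support_coeff_mul_subset f g hu)
  rw [map_add]
  exact add_le_add (hf u₁ hu₁) (hg u₂ hu₂)

theorem le_of_mem_support_prod [CommSemiring R] [AddCommMonoid G] {ι : Type*} (D : G →+ ℤ)
    (s : Finset ι) (f : ι → AddMonoidAlgebra R G) (c : ι → ℤ)
    (h : ∀ i ∈ s, ∀ u ∈ (f i).coeff.support, c i ≤ D u) :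
    ∀ u ∈ (∏ i ∈ s, f i).coeff.support, ∑ i ∈ s, c i ≤ D u := by
  classical
  induction s using Finset.induction_on with
  | empty =>
    intro u hu
    rw [Finset.prod_empty, one_def, coeff_single] at hu
    simp [Finset.mem_singleton.1 (Finsupp.support_single_subset hu)]
  | insert i s hi ih =>
    rw [Finset.prod_insert hi, Finset.sum_insert hi]
    exact le_of_mem_support_mul D (h i (Finset.mem_insert_self i s))
      (ih fun j hj => h j (Finset.mem_insert_of_mem hj))

theorem coeff_mul_of_support_subset_zmultiples [Semiring R] [AddCommGroup G] (π : G →+ ℤ)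
    {v : G} (hv : π v = 1) {f g : AddMonoidAlgebra R G}
    (hf : ↑f.coeff.support ⊆ (AddSubgroup.zmultiples v : Set G))
    (hg : ∀ u ∈ g.coeff.support, π u = 0) (w : G) :
    (f * g).coeff w = f.coeff (π w • v) * g.coeff (w - π w • v) := by
  rw [coeff_mul_apply_left, Finsupp.sum_eq_single (π w • v), neg_add_eq_sub]
  · intro u hu hne
    obtain ⟨k, rfl⟩ := AddSubgroup.mem_zmultiples_iff.1 (hf (Finsupp.mem_support_iff.2 hu))
    refine mul_eq_zero_of_right _ (Finsupp.notMem_support_iff.1 fun hmem => hne ?_)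
    have := hg _ hmem
    rw [map_add, map_neg, map_zsmul, hv, smul_eq_mul, mul_one] at this
    rw [show k = π w by linarith]
  · exact fun _ => zero_mul _

end AddMonoidAlgebra

open Polynomial

theorem q_pow_succ_ne_one (k : ℕ) : q ^ (k + 1) ≠ 1 := by
  intro h
  have hX : (X : ℚ[X]) ^ (k + 1) = 1 := RatFunc.algebraMap_injective ℚ <| by
    simpa [q, RatFunc.algebraMap_X] using h
  simpa using congrArg natDegree hX

/-- `p = 0 ∨ natDegree p ≤ d` is `deg p ≤ d` with `deg 0 = -∞`, so for `d < 0` it forces `c = 0`. -/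
def IsPolyInQPow (d : ℤ) (c : ℕ → K) : Prop :=
  ∃ p : K[X], (p = 0 ∨ (p.natDegree : ℤ) ≤ d) ∧ ∀ a, c a = p.eval (q ^ a)

namespace IsPolyInQPow

variable {d d' : ℤ} {c c' : ℕ → K}

theorem zero (d : ℤ) : IsPolyInQPow d (fun _ => 0) := ⟨0, Or.inl rfl, fun _ => by simp⟩

theorem const (r : K) : IsPolyInQPow 0 (fun _ => r) :=
  ⟨C r, Or.inr (by simp), fun _ => by simp⟩

theorem mono (h : IsPolyInQPow d c) (hd : d ≤ d') : IsPolyInQPow d' c := by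
  obtain ⟨p, hp, hc⟩ := h
  exact ⟨p, hp.imp_right (·.trans hd), hc⟩

theorem eq_zero (h : IsPolyInQPow d c) (hd : d < 0) : c = 0 := by
  obtain ⟨p, hp | hp, hc⟩ := h
  · ext a
    simp [hc, hp]
  · omega

theorem add (h : IsPolyInQPow d c) (h' : IsPolyInQPow d c') : IsPolyInQPow d (c + c') := by
  obtain ⟨p, hp, hc⟩ := h
  obtain ⟨p', hp', hc'⟩ := h'
  refine ⟨p + p', ?_, fun a => by simp [hc, hc']⟩
  rcases hp with rfl | hp
  · simpa using hp'
  rcases hp' with rfl | hp'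
  · simpa using Or.inr hp
  exact Or.inr ((Nat.cast_le.2 (natDegree_add_le p p')).trans (by simp [hp, hp']))

theorem sum {ι : Type*} (s : Finset ι) {c : ι → ℕ → K} (h : ∀ i ∈ s, IsPolyInQPow d (c i)) :
    IsPolyInQPow d (fun a => ∑ i ∈ s, c i a) := by
  simpa only [← Finset.sum_fn] using
    Finset.sum_induction c (IsPolyInQPow d) (fun _ _ => add) (zero d) h

theorem mul (h : IsPolyInQPow d c) (h' : IsPolyInQPow d' c') :
    IsPolyInQPow (d + d') (fun a => c a * c' a) := by
  obtain ⟨p, hp, hc⟩ := h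
  obtain ⟨p', hp', hc'⟩ := h'
  refine ⟨p * p', ?_, fun a => by simp [hc, hc']⟩
  rcases hp with rfl | hp
  · simp
  rcases hp' with rfl | hp'
  · simp
  exact Or.inr ((Nat.cast_le.2 natDegree_mul_le).trans (by push_cast; omega))

theorem const_mul (r : K) (h : IsPolyInQPow d c) : IsPolyInQPow d (fun a => r * c a) := by
  have h' := (const r).mul h
  rwa [zero_add] at h'

end IsPolyInQPow

/-- The coefficient of `z ^ k` in `(z; q)_a`, namely `(-1)^k q^(k choose 2) [a choose k]_q`,
as a polynomial in `x = q ^ a`. -/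
def pochCoeffPoly (k : ℕ) : K[X] :=
  C (∏ i ∈ range k, (1 - q ^ (i + 1)))⁻¹ * ∏ j ∈ range k, (X - C (q ^ j))

theorem pochCoeffPoly_zero : pochCoeffPoly 0 = 1 := by simp [pochCoeffPoly]

theorem natDegree_pochCoeffPoly_le (k : ℕ) : (pochCoeffPoly k).natDegree ≤ k := by
  refine natDegree_C_mul_le _ _ |>.trans <| (natDegree_prod_le _ _).trans ?_
  simpa using Finset.sum_le_card_nsmul (range k) _ 1 fun j _ => (natDegree_X_sub_C (q ^ j)).le

theorem eval_one_pochCoeffPoly_succ (k : ℕ) : (pochCoeffPoly (k + 1)).eval 1 = 0 := by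
  simp [pochCoeffPoly, eval_prod, Finset.prod_range_succ']

theorem eval_q_mul_pochCoeffPoly_succ (k : ℕ) (x : K) :
    (pochCoeffPoly (k + 1)).eval (q * x) =
      (pochCoeffPoly (k + 1)).eval x - x * (pochCoeffPoly k).eval x := by
  have hk : 1 - q ^ (k + 1) ≠ 0 := sub_ne_zero.2 (q_pow_succ_ne_one k).symm
  have hD : ∏ i ∈ range k, (1 - q ^ (i + 1)) ≠ 0 :=
    prod_ne_zero_iff.2 fun i _ => sub_ne_zero.2 (q_pow_succ_ne_one i).symm
  have hshift : ∏ j ∈ range (k + 1), (q * x - q ^ j) =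
      q ^ k * (q * x - 1) * ∏ j ∈ range k, (x - q ^ j) := by
    rw [prod_range_succ']
    simp only [pow_succ', ← mul_sub, prod_mul_distrib, prod_const, card_range]
    ring
  simp only [pochCoeffPoly, eval_mul, eval_C, eval_prod, eval_sub, eval_X]
  rw [hshift, prod_range_succ (fun j => x - q ^ j), prod_range_succ (fun i => 1 - q ^ (i + 1))]
  field_simp
  ring

section Pochhammer

variable {m : ℕ}

theorem support_one_sub_mon_subset (v : Fin m → ℤ) (c : K) :
    (1 - mon v c).coeff.support ⊆ {0, v} := by
  classical
  rw [AddMonoidAlgebra.coeff_sub, AddMonoidAlgebra.one_def, mon, AddMonoidAlgebra.coeff_single,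
    AddMonoidAlgebra.coeff_single]
  refine Finsupp.support_sub.trans (Finset.union_subset ?_ ?_) <;>
    exact Finsupp.support_single_subset.trans (by simp)

theorem support_poch_subset_multiples (v : Fin m → ℤ) (c : K) (k : ℕ) :
    ↑(poch v c k).coeff.support ⊆ (AddSubmonoid.multiples v : Set (Fin m → ℤ)) := by
  refine AddMonoidAlgebra.support_prod_subset_addSubmonoid _ _ _ fun j _ u hu => ?_
  rcases Finset.mem_insert.1 (support_one_sub_mon_subset v _ hu) with rfl | hu
  · exact zero_mem _
  · rw [Finset.mem_singleton.1 hu]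
    exact AddSubmonoid.mem_multiples v

theorem le_apply_of_mem_support_poch {v : Fin (m + 1) → ℤ} (hv : v 0 = -1) (c : K) (k : ℕ) :
    ∀ u ∈ (poch v c k).coeff.support, -(k : ℤ) ≤ u 0 := by
  have := AddMonoidAlgebra.le_of_mem_support_prod (Pi.evalAddMonoidHom (fun _ => ℤ) 0)
    (range k) (fun j => 1 - mon v (c * q ^ j)) (fun _ => -1) fun j _ u hu => by
      rcases Finset.mem_insert.1 (support_one_sub_mon_subset v _ hu) with rfl | hu
      · simp
      · simp [Finset.mem_singleton.1 hu, hv]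
  rw [poch]
  simpa using this

theorem coeff_poch_succ (v : Fin m → ℤ) (c : K) (a : ℕ) (w : Fin m → ℤ) :
    (poch v c (a + 1)).coeff w =
      (poch v c a).coeff w - (poch v c a).coeff (w - v) * (c * q ^ a) := by
  rw [poch, prod_range_succ, ← poch, mul_sub, mul_one, AddMonoidAlgebra.coeff_sub,
    Finsupp.sub_apply, mon, AddMonoidAlgebra.coeff_mul_single_apply, sub_eq_add_neg w v]

variable {v : Fin (m + 1) → ℤ}

theorem coeff_poch_eq_zero (hv : v 0 = 1) (c : K) (a : ℕ) {w : Fin (m + 1) → ℤ}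
    (hw : w 0 < 0) :
    (poch v c a).coeff w = 0 := by
  by_contra h
  obtain ⟨j, rfl⟩ := (AddSubmonoid.mem_multiples_iff _ _).1
    (support_poch_subset_multiples v c a (Finsupp.mem_support_iff.2 h))
  simp only [Pi.smul_apply, hv, Int.nsmul_eq_mul, mul_one] at hw
  omega

theorem coeff_poch_one_nsmul (hv : v 0 = 1) (a k : ℕ) :
    (poch v 1 a).coeff (k • v) = (pochCoeffPoly k).eval (q ^ a) := by
  induction a generalizing k with
  | zero =>
    cases k with
    | zero => simp [poch, pochCoeffPoly_zero, AddMonoidAlgebra.one_def]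
    | succ k =>
      rw [pow_zero, eval_one_pochCoeffPoly_succ, poch, prod_range_zero, AddMonoidAlgebra.one_def,
        AddMonoidAlgebra.coeff_single, Finsupp.single_eq_of_ne]
      intro h
      have := congrFun h 0
      simp only [Pi.smul_apply, hv, Int.nsmul_eq_mul, mul_one, Pi.zero_apply] at this
      omega
  | succ a ih =>
    rw [coeff_poch_succ, one_mul]
    cases k with
    | zero =>
      rw [zero_smul, zero_sub, coeff_poch_eq_zero hv 1 a (w := -v) (by simp [hv]),
        ← zero_smul ℕ v, ih, pochCoeffPoly_zero]
      simp
    | succ k =>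
      rw [succ_nsmul, add_sub_cancel_right, ← succ_nsmul, ih, ih, pow_succ',
        eval_q_mul_pochCoeffPoly_succ]
      ring

theorem isPolyInQPow_coeff_poch (hv : v 0 = 1) (w : Fin (m + 1) → ℤ) :
    IsPolyInQPow (w 0) (fun a => (poch v 1 a).coeff w) := by
  by_cases hw : w ∈ AddSubmonoid.multiples v
  · obtain ⟨k, rfl⟩ := (AddSubmonoid.mem_multiples_iff _ _).1 hw
    refine ⟨pochCoeffPoly k, Or.inr ?_, (coeff_poch_one_nsmul hv · k)⟩
    simpa [hv] using natDegree_pochCoeffPoly_le k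
  · convert IsPolyInQPow.zero (w 0) with a
    by_contra h
    exact hw (support_poch_subset_multiples v 1 a (Finsupp.mem_support_iff.2 h))

end Pochhammer

theorem isPolyInQPow_coeff_prod_poch {m : ℕ} (s : Finset (Fin m)) (w : Fin (m + 1) → ℤ) :
    IsPolyInQPow (w 0) (fun a => (∏ i ∈ s, poch (e 0 - e i.succ) 1 a).coeff w) := by
  classical
  induction s using Finset.induction_on generalizing w with
  | empty =>
    by_cases hw : w = 0
    · subst hw
      simpa [AddMonoidAlgebra.one_def] using IsPolyInQPow.const (1 : K)
    · simpa [AddMonoidAlgebra.one_def, Finsupp.single_apply, Ne.symm hw] using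
        IsPolyInQPow.zero (w 0)
  | insert i s hi ih =>
    set v : Fin (m + 1) → ℤ := e 0 - e i.succ
    set π : (Fin (m + 1) → ℤ) →+ ℤ := -Pi.evalAddMonoidHom (fun _ => ℤ) i.succ
    have hv : v 0 = 1 := by simp [v, e, (Fin.succ_ne_zero i).symm]
    have hπv : π v = 1 := by simp [π, v, e, Fin.succ_ne_zero]
    have hf : ∀ a,
        ↑(poch v 1 a).coeff.support ⊆ (AddSubgroup.zmultiples v : Set (Fin (m + 1) → ℤ)) :=
      fun a u hu => AddSubmonoid.multiples_le.2 (AddSubgroup.mem_zmultiples v)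
        (support_poch_subset_multiples v 1 a hu)
    have hg : ∀ a, ∀ u ∈ (∏ j ∈ s, poch (e 0 - e j.succ) 1 a).coeff.support, π u = 0 := by
      intro a u hu
      refine AddMonoidAlgebra.support_prod_subset_addSubmonoid π.ker.toAddSubmonoid s _
        (fun j hj => (support_poch_subset_multiples _ 1 a).trans
          (AddSubmonoid.multiples_le.2 ?_)) hu
      have hji : j ≠ i := fun h => hi (h ▸ hj)
      simp [π, e, hji, Fin.succ_ne_zero]
    have hprod : ∀ a, (∏ j ∈ insert i s, poch (e 0 - e j.succ) 1 a).coeff w =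
        (poch v 1 a).coeff (π w • v) *
          (∏ j ∈ s, poch (e 0 - e j.succ) 1 a).coeff (w - π w • v) :=
      fun a => by
        rw [prod_insert hi]
        exact AddMonoidAlgebra.coeff_mul_of_support_subset_zmultiples π hπv (hf a) (hg a) w
    simp only [hprod]
    simpa using (isPolyInQPow_coeff_poch hv (π w • v)).mul (ih (w - π w • v))

theorem CT_mul {m : ℕ} (f g : L m) :
    CT (f * g) = ∑ u ∈ f.coeff.support, f.coeff u * g.coeff (-u) := by
  simp [CT, AddMonoidAlgebra.coeff_mul_apply_left, Finsupp.sum]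

theorem isPolyInQPow_CT_mul_prod_poch {m : ℕ} (F : L (m + 1)) (d : ℤ)
    (hF : ∀ u ∈ F.coeff.support, -d ≤ u 0) :
    IsPolyInQPow d fun a => CT (F * ∏ i : Fin m, poch (e 0 - e i.succ) 1 a) := by
  simp only [CT_mul]
  exact IsPolyInQPow.sum _ fun u hu =>
    ((isPolyInQPow_coeff_prod_poch univ (-u)).const_mul _).mono <| by
      rw [Pi.neg_apply]
      linarith [hF u hu]

theorem le_apply_zero_of_mem_support_mon_mul_prod_poch {n : ℕ} (b : ℕ) (t : ℤ) {Lf : L (n + 1)}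
    (hLf : ∀ v ∈ Lf.coeff.support, v 0 = 0) :
    ∀ u ∈ (mon (Pi.single 0 t) 1 * Lf * ∏ i : Fin n, poch (e i.succ - e 0) q b).coeff.support,
      t - n * b ≤ u 0 := by
  let D := Pi.evalAddMonoidHom (fun _ : Fin (n + 1) => ℤ) 0
  have hmon : ∀ u ∈ (mon (Pi.single 0 t) 1 : L (n + 1)).coeff.support, t ≤ D u := by
    intro u hu
    rw [mon, AddMonoidAlgebra.coeff_single] at hu
    simp [D, Finset.mem_singleton.1 (Finsupp.support_single_subset hu)]
  have hpoch := AddMonoidAlgebra.le_of_mem_support_prod D univ _ _ fun (i : Fin n) _ =>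
    le_apply_of_mem_support_poch (v := e i.succ - e 0) (by simp [e]) q b
  intro u hu
  have := AddMonoidAlgebra.le_of_mem_support_mul D
    (AddMonoidAlgebra.le_of_mem_support_mul D hmon fun u hu => (hLf u hu).ge) hpoch u hu
  simp only [sum_const, card_univ, Fintype.card_fin, Int.nsmul_eq_mul, D,
    Pi.evalAddMonoidHom_apply] at this
  linarith

theorem polynomiality_lemma (n b : ℕ) (t : ℤ) (Lf : L (n + 1))
    (hLf : ∀ v ∈ Lf.coeff.support, v 0 = 0) :
    (t ≤ (n : ℤ) * b →
      ∃ p : Polynomial K, (p.natDegree : ℤ) ≤ (n : ℤ) * b - t ∧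
        ∀ a : ℕ, CT (mon (Pi.single 0 t) 1 * Lf *
            ∏ i : Fin n, poch (e 0 - e i.succ) 1 a * poch (e i.succ - e 0) q b)
          = p.eval (q ^ a)) ∧
    ((n : ℤ) * b < t →
      ∀ a : ℕ, CT (mon (Pi.single 0 t) 1 * Lf *
          ∏ i : Fin n, poch (e 0 - e i.succ) 1 a * poch (e i.succ - e 0) q b) = 0) := by
  have hsplit : ∀ a, mon (Pi.single 0 t) 1 * Lf *
      ∏ i : Fin n, poch (e 0 - e i.succ) 1 a * poch (e i.succ - e 0) q b =
      (mon (Pi.single 0 t) 1 * Lf * ∏ i : Fin n, poch (e i.succ - e 0) q b) *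
        ∏ i : Fin n, poch (e 0 - e i.succ) 1 a := fun a => by
    rw [prod_mul_distrib]
    ring
  have hCT := isPolyInQPow_CT_mul_prod_poch _ (n * b - t) fun u hu =>
    (neg_sub (n * b : ℤ) t).symm ▸ le_apply_zero_of_mem_support_mon_mul_prod_poch b t hLf u hu
  simp only [hsplit]
  refine ⟨fun ht => ?_, fun ht => congrFun (hCT.eq_zero (by omega))⟩
  obtain ⟨p, hp | hp, hc⟩ := hCT
  · exact ⟨p, by rw [hp, natDegree_zero, Nat.cast_zero]; omega, hc⟩
  · exact ⟨p, hp, hc⟩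

end
end

section
/- Let $s,b,c,d$ be nonnegative integers with $1\leq d\leq sc+b$, and suppose $1\leq k_i\leq d$ for $i=1,\dots,s$ are integers for which there is a permutation $w\in\mathfrak{S}_s$ and nonnegative integers $t_1,\dots,t_s$ with $k_{w(1)}=b+t_1$, $k_{w(j)}-k_{w(j-1)}=c+t_j$ for $2\leq j\leq s$, $1\leq\sum_j t_j\leq c$, and $t_j>0$ if $w(j-1)<w(j)$ (convention $w(0)=0$). Then: (1) $k_{w(1)}\leq b+c$; (2) $k_{w(s)}\geq d-c+1$; (3) $k_{w(j)}-k_{w(j-1)}\leq 2c-1$ for $2\leq j\leq s$. Consequently, the union of intervals $\bigcup_{j=1}^s\{k_j-k_s+1-c,\dots,k_j-k_s+c-1\}\cup\{1-k_s,\dots,b-k_s\}$ covers $\{1-k_s,2-k_s,\dots,d-k_s\}$. -/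
/-!
The arithmetic core of Proposition `cor-Laurent`: under the case-(3)
configuration with `1 ≤ ∑ t_j ≤ c` and `1 ≤ k_i ≤ d ≤ sc + b`, one has
(1) `k_{w(1)} ≤ b + c`, (2) `k_{w(s)} ≥ d - c + 1`,
(3) `k_{w(j)} - k_{w(j-1)} ≤ 2c - 1` for `2 ≤ j ≤ s`, and consequently the
interval `S_0 = {1-k_s,…,d-k_s}` is covered by
`B = {1-k_s,…,b-k_s}` together with the intervals
`S'_j = {k_j-k_s+1-c,…,k_j-k_s+c-1}`.
Indices are 0-based (`k i` is `k_{i+1}`; `k ⟨s-1,_⟩` is `k_s`).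
-/

open Finset

theorem laurent_covering (s b c d : ℕ) (hs : 1 ≤ s)
    (hd1 : 1 ≤ d) (hd2 : d ≤ s * c + b)
    (k : Fin s → ℤ) (hk : ∀ i, 1 ≤ k i ∧ k i ≤ (d : ℤ))
    (w : Equiv.Perm (Fin s)) (tt : Fin s → ℕ)
    (h1 : k (w ⟨0, hs⟩) = (b : ℤ) + tt ⟨0, hs⟩)
    (h2 : ∀ j : ℕ, (hj : j + 1 < s) →
      k (w ⟨j + 1, hj⟩) - k (w ⟨j, Nat.lt_of_succ_lt hj⟩) = (c : ℤ) + tt ⟨j + 1, hj⟩)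
    (hfirst : 0 < tt ⟨0, hs⟩)
    (hasc : ∀ j : ℕ, (hj : j + 1 < s) →
      w ⟨j, Nat.lt_of_succ_lt hj⟩ < w ⟨j + 1, hj⟩ → 0 < tt ⟨j + 1, hj⟩)
    (hsum1 : 1 ≤ ∑ j, tt j) (hsum2 : ∑ j, tt j ≤ c) :
    k (w ⟨0, hs⟩) ≤ (b : ℤ) + c ∧
    (d : ℤ) - c + 1 ≤ k (w ⟨s - 1, by omega⟩) ∧
    (∀ j : ℕ, (hj : j + 1 < s) →
      k (w ⟨j + 1, hj⟩) - k (w ⟨j, Nat.lt_of_succ_lt hj⟩) ≤ 2 * (c : ℤ) - 1) ∧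
    (∀ x : ℤ, 1 - k ⟨s - 1, by omega⟩ ≤ x → x ≤ (d : ℤ) - k ⟨s - 1, by omega⟩ →
      ((1 - k ⟨s - 1, by omega⟩ ≤ x ∧ x ≤ (b : ℤ) - k ⟨s - 1, by omega⟩) ∨
        ∃ j : Fin s, k j - k ⟨s - 1, by omega⟩ + 1 - c ≤ x ∧
          x ≤ k j - k ⟨s - 1, by omega⟩ + c - 1)) := by
  have hc1 : 1 ≤ c := le_trans hsum1 hsum2
  have ht0 : tt ⟨0, hs⟩ ≤ ∑ j, tt j :=
    Finset.single_le_sum (fun i _ => Nat.zero_le _) (Finset.mem_univ _)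
  -- Part 1
  have part1 : k (w ⟨0, hs⟩) ≤ (b : ℤ) + c := by
    rw [h1]
    have : tt ⟨0, hs⟩ ≤ c := le_trans ht0 hsum2
    omega
  -- Part 3
  have part3 : ∀ j : ℕ, (hj : j + 1 < s) →
      k (w ⟨j + 1, hj⟩) - k (w ⟨j, Nat.lt_of_succ_lt hj⟩) ≤ 2 * (c : ℤ) - 1 := by
    intro j hj
    have hne : (⟨0, hs⟩ : Fin s) ≠ ⟨j + 1, hj⟩ := by
      simp [Fin.ext_iff]
    have hpair : tt ⟨0, hs⟩ + tt ⟨j + 1, hj⟩ ≤ ∑ i, tt i := by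
      calc tt ⟨0, hs⟩ + tt ⟨j + 1, hj⟩
          = ∑ i ∈ ({⟨0, hs⟩, ⟨j + 1, hj⟩} : Finset (Fin s)), tt i :=
            (Finset.sum_pair hne).symm
        _ ≤ ∑ i, tt i :=
            Finset.sum_le_sum_of_subset (Finset.subset_univ _)
    rw [h2 j hj]
    have : tt ⟨j + 1, hj⟩ + 1 ≤ c := by omega
    omega
  -- chain lower bound: k (w j) ≥ k (w 0) + j * c
  have hA : ∀ j : ℕ, (hj : j < s) → k (w ⟨0, hs⟩) + (j : ℤ) * c ≤ k (w ⟨j, hj⟩) := by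
    intro j
    induction j with
    | zero => intro hj; simp
    | succ n ih =>
      intro hj
      have hrec := h2 n hj
      have hprev := ih (Nat.lt_of_succ_lt hj)
      have hnn : (0 : ℤ) ≤ (tt ⟨n + 1, hj⟩ : ℤ) := Int.natCast_nonneg _
      have hcast : ((n + 1 : ℕ) : ℤ) * c = (n : ℤ) * c + c := by push_cast; ring
      rw [hcast]
      linarith
  -- Part 2
  have part2 : (d : ℤ) - c + 1 ≤ k (w ⟨s - 1, by omega⟩) := by
    have hAs := hA (s - 1) (by omega)
    have ht0' : (1 : ℤ) ≤ (tt ⟨0, hs⟩ : ℤ) := by exact_mod_cast hfirst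
    have hd2' : (d : ℤ) ≤ (s : ℤ) * c + b := by exact_mod_cast hd2
    have hcast : ((s - 1 : ℕ) : ℤ) * c = (s : ℤ) * c - c := by
      have : ((s - 1 : ℕ) : ℤ) = (s : ℤ) - 1 := by
        have : (1 : ℤ) ≤ (s : ℤ) := by exact_mod_cast hs
        omega
      rw [this]; ring
    rw [hcast] at hAs
    rw [h1] at hAs
    linarith
  -- covering chain
  have hB : ∀ j : ℕ, (hj : j < s) → ∀ y : ℤ, (b : ℤ) + 1 ≤ y →
      y ≤ k (w ⟨j, hj⟩) + c - 1 →
      ∃ i : Fin s, k i - (c : ℤ) + 1 ≤ y ∧ y ≤ k i + c - 1 := by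
    intro j
    induction j with
    | zero =>
      intro hj y hy1 hy2
      exact ⟨w ⟨0, hs⟩, by omega, hy2⟩
    | succ n ih =>
      intro hj y hy1 hy2
      by_cases hcase : y ≤ k (w ⟨n, Nat.lt_of_succ_lt hj⟩) + c - 1
      · exact ih (Nat.lt_of_succ_lt hj) y hy1 hcase
      · refine ⟨w ⟨n + 1, hj⟩, ?_, hy2⟩
        have h3 := part3 n hj
        omega
  refine ⟨part1, part2, part3, ?_⟩
  intro x hx1 hx2
  set K := k ⟨s - 1, by omega⟩ with hK
  by_cases hxb : x ≤ (b : ℤ) - K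
  · exact Or.inl ⟨hx1, hxb⟩
  · right
    obtain ⟨i, hi1, hi2⟩ := hB (s - 1) (by omega) (x + K) (by omega) (by omega)
    exact ⟨i, by omega, by omega⟩
end
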